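/- arXiv:1307.5934 — 6 statements merged into one kernel-verified Lean document; each statement's English description precedes it below -/
import Mathlib

section
/- Strong duality holds between the offline primal problem and its dual: the optimal value P* of the primal equals the optimal (infimum) value D* of the dual. Furthermore, the objective value of any feasible solution (v, y) of the dual is an upper bound on P*. -/
open Finset Real
open scoped Classical

noncomputable section

/-- Expectation of `f` over a uniformly random permutation of `Fin n`. -/
def permExp (n : ℕ) (f : Equiv.Perm (Fin n) → ℝ) : ℝ :=
  (∑ σ : Equiv.Perm (Fin n), f σ) / (Nat.factorial n : ℝ)

/-- Probability of the event `P` over a uniformly random permutation of `Fin n`. -/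
def permProb (n : ℕ) (P : Equiv.Perm (Fin n) → Prop) : ℝ :=
  ((Finset.univ.filter (fun σ : Equiv.Perm (Fin n) => P σ)).card : ℝ) / (Nat.factorial n : ℝ)

/-- Each `M i` is nondecreasing, concave, continuously differentiable on `[0,∞)`, `M i 0 = 0`. -/
def GoodM {m : ℕ} (M : Fin m → ℝ → ℝ) : Prop :=
  ∀ i, MonotoneOn (M i) (Set.Ici 0) ∧ ConcaveOn ℝ (Set.Ici 0) (M i) ∧
    (∀ x ∈ Set.Ici (0 : ℝ), DifferentiableAt ℝ (M i) x) ∧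
    ContinuousOn (deriv (M i)) (Set.Ici 0) ∧ M i 0 = 0

/-- Feasibility for the offline primal problem. -/
def primalFeasible {m n : ℕ} (x : Fin m → Fin n → ℝ) : Prop :=
  (∀ i j, 0 ≤ x i j) ∧ ∀ j, ∑ i, x i j ≤ 1

/-- Objective of the offline primal problem. -/
def primalObj {m n : ℕ} (b : Fin m → Fin n → ℝ) (M : Fin m → ℝ → ℝ)
    (x : Fin m → Fin n → ℝ) : ℝ :=
  ∑ i, M i (∑ j, b i j * x i j)

/-- `OPT` is the optimal value of the offline primal problem. -/
def IsOPT {m n : ℕ} (b : Fin m → Fin n → ℝ) (M : Fin m → ℝ → ℝ) (OPT : ℝ) : Prop :=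
  IsGreatest {v | ∃ x : Fin m → Fin n → ℝ, primalFeasible x ∧ v = primalObj b M x} OPT

/-- `alloc w q` is the 0/1 allocation putting mass one on a single index maximizing
`q k * (M k)' (w k)`, ties broken by a fixed rule. -/
def IsAllocRule {m : ℕ} (M : Fin m → ℝ → ℝ)
    (alloc : (Fin m → ℝ) → (Fin m → ℝ) → Fin m → ℝ) : Prop :=
  ∀ w q : Fin m → ℝ, ∃ i0 : Fin m,
    (∀ i, alloc w q i = if i = i0 then 1 else 0) ∧
    ∀ k, q k * deriv (M k) (w k) ≤ q i0 * deriv (M i0) (w i0)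

/-- Feasibility for the partial problem `(P_ℓ)` with arrival order `σ`: the allocation is
supported on the first `ℓ` arrivals, and `u i = ∑_{j<ℓ} (n/ℓ) b_{i,σ(j)} x_{ij}`. -/
def partialFeasible {m n : ℕ} (b : Fin m → Fin n → ℝ) (σ : Equiv.Perm (Fin n)) (ℓ : ℕ)
    (x : Fin m → Fin n → ℝ) (u : Fin m → ℝ) : Prop :=
  (∀ i j, 0 ≤ x i j) ∧ (∀ j, ∑ i, x i j ≤ 1) ∧
  (∀ i (j : Fin n), ℓ ≤ (j : ℕ) → x i j = 0) ∧
  ∀ i, ∑ j, ((n : ℝ) / (ℓ : ℝ)) * b i (σ j) * x i j = u i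

/-- `u` is the `u`-part of an optimal solution of the partial problem `(P_ℓ)`. -/
def partialOptimal {m n : ℕ} (b : Fin m → Fin n → ℝ) (M : Fin m → ℝ → ℝ)
    (σ : Equiv.Perm (Fin n)) (ℓ : ℕ) (u : Fin m → ℝ) : Prop :=
  (∃ x, partialFeasible b σ ℓ x u) ∧
  ∀ x' u', partialFeasible b σ ℓ x' u' → ∑ i, M i (u' i) ≤ ∑ i, M i (u i)

/-- General position assumption: for every nonzero `p`, at most `m` columns `j` have a
non-singleton argmax set of `i ↦ b i j * p i`. -/
def GeneralPosition {m n : ℕ} (b : Fin m → Fin n → ℝ) : Prop :=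
  ∀ p : Fin m → ℝ, p ≠ 0 →
    ({j : Fin n | ¬ ∃! i : Fin m, ∀ k, b k j * p k ≤ b i j * p i}).ncard ≤ m

/-- Total value collected by the One-Time Learning Algorithm: nothing is allocated on the
first `en = εn` arrivals, afterwards arrival `j` is allocated by the rule `x_i(û, b_j)`. -/
def olaRevenue {m n : ℕ} (b : Fin m → Fin n → ℝ) (M : Fin m → ℝ → ℝ)
    (alloc : (Fin m → ℝ) → (Fin m → ℝ) → Fin m → ℝ) (en : ℕ)
    (uhat : Fin m → ℝ) (σ : Equiv.Perm (Fin n)) : ℝ :=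
  ∑ i, M i (∑ j : Fin n,
    if (j : ℕ) < en then 0 else b i (σ j) * alloc uhat (fun i' => b i' (σ j)) i)

/-- Total value collected by the Dynamic Learning Algorithm: nothing is allocated on the
first `en = εn` arrivals; for `2^r en ≤ j < 2^{r+1} en` arrival `j` is allocated by the rule
`x_i(û^{r+1}, b_j)`, where `uhat k` denotes `û^k`, the optimal `u` of `(P_{ℓ_k})`,
`ℓ_k = 2^{k-1} εn`. -/
def dlaRevenue {m n : ℕ} (b : Fin m → Fin n → ℝ) (M : Fin m → ℝ → ℝ)
    (alloc : (Fin m → ℝ) → (Fin m → ℝ) → Fin m → ℝ) (en : ℕ)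
    (uhat : ℕ → Fin m → ℝ) (σ : Equiv.Perm (Fin n)) : ℝ :=
  ∑ i, M i (∑ j : Fin n,
    if (j : ℕ) < en then 0
    else b i (σ j) * alloc (uhat (Nat.log 2 ((j : ℕ) / en) + 1)) (fun i' => b i' (σ j)) i)

/-- Value collected for bidder `i` over arrival positions in `[lo, hi)` using the allocation
rule with threshold vector `uhat`. -/
def rangeValue {m n : ℕ} (b : Fin m → Fin n → ℝ)
    (alloc : (Fin m → ℝ) → (Fin m → ℝ) → Fin m → ℝ)
    (uhat : Fin m → ℝ) (lo hi : ℕ) (σ : Equiv.Perm (Fin n)) (i : Fin m) : ℝ :=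
  ∑ j : Fin n, if lo ≤ (j : ℕ) ∧ (j : ℕ) < hi
    then b i (σ j) * alloc uhat (fun i' => b i' (σ j)) i else 0

/-- Feasibility for the dual problem. -/
def dualFeasible {m n : ℕ} (b : Fin m → Fin n → ℝ) (M : Fin m → ℝ → ℝ)
    (v : Fin m → ℝ) (y : Fin n → ℝ) : Prop :=
  (∀ i, 0 ≤ v i) ∧ (∀ j, 0 ≤ y j) ∧ ∀ i j, b i j * deriv (M i) (v i) ≤ y j

/-- Objective of the dual problem. -/
def dualObj {m n : ℕ} (b : Fin m → Fin n → ℝ) (M : Fin m → ℝ → ℝ)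
    (v : Fin m → ℝ) (y : Fin n → ℝ) : ℝ :=
  ∑ j, y j + ∑ i, (M i (v i) - deriv (M i) (v i) * v i)

/-!
Weak duality is the tangent-line inequality `M_i s ≤ M_i v + M_i'(v) (s - v)` of the concave
`M_i`, summed over `i` and combined with `b_ij M_i'(v_i) ≤ y_j` and `∑_i x_ij ≤ 1`.

Conversely, let `x` be optimal with loads `s_i = ∑_j b_ij x_ij`. Moving a fraction `δ` of
column `j` towards bidder `i₀` cannot increase the objective, so its derivative at `δ = 0` is
nonpositive: `b_{i₀j} M_{i₀}'(s_{i₀}) ≤ ∑_i b_ij M_i'(s_i) x_ij`. Hence `v = s` together with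
`y_j = ∑_i b_ij M_i'(s_i) x_ij` is dual feasible, and its objective is exactly `P*`.
-/

theorem ConcaveOn.le_add_deriv_mul_sub {S : Set ℝ} {f : ℝ → ℝ} {x y : ℝ}
    (hf : ConcaveOn ℝ S f) (hx : x ∈ S) (hy : y ∈ S) (hd : DifferentiableAt ℝ f x) :
    f y ≤ f x + deriv f x * (y - x) := by
  rcases lt_trichotomy x y with hxy | rfl | hyx
  · have h := hf.slope_le_deriv hx hy hxy hd
    rw [slope_def_field, div_le_iff₀ (sub_pos.2 hxy)] at h
    linarith
  · simp
  · have h := hf.deriv_le_slope hy hx hyx hd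
    rw [slope_def_field, le_div_iff₀ (sub_pos.2 hyx)] at h
    linarith

theorem MonotoneOn.deriv_nonneg_of_concaveOn {f : ℝ → ℝ} {a x : ℝ}
    (hmono : MonotoneOn f (Set.Ici a)) (hconc : ConcaveOn ℝ (Set.Ici a) f) (hx : a ≤ x)
    (hd : DifferentiableAt ℝ f x) : 0 ≤ deriv f x := by
  have hx1 : a ≤ x + 1 := by linarith
  have htangent := hconc.le_add_deriv_mul_sub hx hx1 hd
  have hmono' := hmono hx hx1 (by linarith)
  linarith

theorem IsLocalMaxOn.hasDerivWithinAt_Ici_nonpos {φ : ℝ → ℝ} {a L : ℝ}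
    (hmax : IsLocalMaxOn φ (Set.Ici a) a) (hd : HasDerivWithinAt φ L (Set.Ici a) a) : L ≤ 0 := by
  have hcone : (1 : ℝ) ∈ posTangentConeAt (Set.Ici a) a :=
    mem_posTangentConeAt_of_segment_subset (by simp [segment_eq_Icc, Set.Icc_subset_Ici_self])
  simpa using hmax.hasFDerivWithinAt_nonpos hd.hasFDerivWithinAt hcone

section Allocation

variable {m n : ℕ} {b : Fin m → Fin n → ℝ} {M : Fin m → ℝ → ℝ}

def primalLoad (b x : Fin m → Fin n → ℝ) (i : Fin m) : ℝ :=
  ∑ j, b i j * x i j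

theorem primalObj_eq_sum_primalLoad (x : Fin m → Fin n → ℝ) :
    primalObj b M x = ∑ i, M i (primalLoad b x i) := rfl

theorem primalLoad_nonneg {x : Fin m → Fin n → ℝ} (hb : ∀ i j, 0 ≤ b i j)
    (hx : ∀ i j, 0 ≤ x i j) (i : Fin m) : 0 ≤ primalLoad b x i :=
  Finset.sum_nonneg fun j _ => mul_nonneg (hb i j) (hx i j)

theorem sum_mul_primalLoad (x : Fin m → Fin n → ℝ) (w : Fin m → ℝ) :
    ∑ i, w i * primalLoad b x i = ∑ j, ∑ i, b i j * w i * x i j := by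
  simp only [primalLoad, Finset.mul_sum]
  rw [Finset.sum_comm]
  exact Finset.sum_congr rfl fun _ _ => Finset.sum_congr rfl fun _ _ => by ring

theorem primalObj_le_dualObj {x : Fin m → Fin n → ℝ} {v : Fin m → ℝ} {y : Fin n → ℝ}
    (hb : ∀ i j, 0 ≤ b i j) (hconc : ∀ i, ConcaveOn ℝ (Set.Ici 0) (M i))
    (hdiff : ∀ i, ∀ t ∈ Set.Ici (0 : ℝ), DifferentiableAt ℝ (M i) t)
    (hx : primalFeasible x) (hvy : dualFeasible b M v y) :
    primalObj b M x ≤ dualObj b M v y := by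
  obtain ⟨hx0, hx1⟩ := hx
  obtain ⟨hv0, hy0, hvy⟩ := hvy
  have tangent : primalObj b M x ≤
      ∑ i, deriv (M i) (v i) * primalLoad b x i + ∑ i, (M i (v i) - deriv (M i) (v i) * v i) := by
    rw [primalObj_eq_sum_primalLoad, ← Finset.sum_add_distrib]
    refine Finset.sum_le_sum fun i _ => ?_
    have htangent :=
      (hconc i).le_add_deriv_mul_sub (hv0 i) (primalLoad_nonneg hb hx0 i) (hdiff i _ (hv0 i))
    linarith
  have pricing : ∑ i, deriv (M i) (v i) * primalLoad b x i ≤ ∑ j, y j :=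
    calc ∑ i, deriv (M i) (v i) * primalLoad b x i
        = ∑ j, ∑ i, b i j * deriv (M i) (v i) * x i j := sum_mul_primalLoad x _
      _ ≤ ∑ j, ∑ i, y j * x i j :=
          Finset.sum_le_sum fun j _ => Finset.sum_le_sum fun i _ =>
            mul_le_mul_of_nonneg_right (hvy i j) (hx0 i j)
      _ = ∑ j, y j * ∑ i, x i j := by simp only [Finset.mul_sum]
      _ ≤ ∑ j, y j := Finset.sum_le_sum fun j _ =>
          mul_le_of_le_one_right (hy0 j) (hx1 j)
  rw [dualObj]
  linarith

def shiftColumn (x : Fin m → Fin n → ℝ) (j : Fin n) (i₀ : Fin m) (δ : ℝ) :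
    Fin m → Fin n → ℝ :=
  fun i j' => if j' = j then x i j + δ * ((if i = i₀ then 1 else 0) - x i j) else x i j'

theorem primalFeasible_shiftColumn {x : Fin m → Fin n → ℝ} (hx : primalFeasible x)
    (j : Fin n) (i₀ : Fin m) {δ : ℝ} (hδ₀ : 0 ≤ δ) (hδ₁ : δ ≤ 1) :
    primalFeasible (shiftColumn x j i₀ δ) := by
  obtain ⟨hx0, hx1⟩ := hx
  refine ⟨fun i j' => ?_, fun j' => ?_⟩
  · unfold shiftColumn
    split_ifs <;> nlinarith [hx0 i j, hx0 i j']
  · by_cases h : j' = j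
    · subst h
      have hsum : ∑ i, shiftColumn x j' i₀ δ i j' = ∑ i, x i j' + δ * (1 - ∑ i, x i j') := by
        simp only [shiftColumn, if_true, Finset.sum_add_distrib, ← Finset.mul_sum,
          Finset.sum_sub_distrib, Finset.sum_ite_eq', Finset.mem_univ]
      rw [hsum]
      nlinarith [hx1 j']
    · simpa [shiftColumn, h] using hx1 j'

theorem primalLoad_shiftColumn (x : Fin m → Fin n → ℝ) (j : Fin n) (i₀ : Fin m) (δ : ℝ)
    (i : Fin m) :
    primalLoad b (shiftColumn x j i₀ δ) i =
      primalLoad b x i + δ * (b i j * ((if i = i₀ then 1 else 0) - x i j)) := by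
  have hterm : ∀ j', b i j' * shiftColumn x j i₀ δ i j' =
      b i j' * x i j' + if j' = j then δ * (b i j * ((if i = i₀ then 1 else 0) - x i j)) else 0 := by
    intro j'
    by_cases h : j' = j
    · subst h; simp only [shiftColumn, if_true]; ring
    · simp [shiftColumn, h]
  simp only [primalLoad, hterm, Finset.sum_add_distrib, Finset.sum_ite_eq', Finset.mem_univ,
    if_true]

theorem mul_deriv_le_sum_of_optimal {x : Fin m → Fin n → ℝ} (hb : ∀ i j, 0 ≤ b i j)
    (hdiff : ∀ i, ∀ t ∈ Set.Ici (0 : ℝ), DifferentiableAt ℝ (M i) t) (hx : primalFeasible x)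
    (hopt : ∀ x', primalFeasible x' → primalObj b M x' ≤ primalObj b M x) (i₀ : Fin m)
    (j : Fin n) :
    b i₀ j * deriv (M i₀) (primalLoad b x i₀) ≤
      ∑ i, b i j * deriv (M i) (primalLoad b x i) * x i j := by
  set c : Fin m → ℝ := fun i => b i j * ((if i = i₀ then 1 else 0) - x i j)
  set φ : ℝ → ℝ := fun δ => primalObj b M (shiftColumn x j i₀ δ)
  have hφ : φ = fun δ => ∑ i, M i (primalLoad b x i + δ * c i) := by
    funext δ
    simp only [φ, primalObj_eq_sum_primalLoad, primalLoad_shiftColumn, c]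
  have hderiv : HasDerivAt φ (∑ i, deriv (M i) (primalLoad b x i) * c i) 0 := by
    rw [hφ]
    refine HasDerivAt.fun_sum fun i _ => ?_
    have hM : HasDerivAt (M i) (deriv (M i) (primalLoad b x i)) (primalLoad b x i + 0 * c i) := by
      rw [zero_mul, add_zero]
      exact (hdiff i _ (primalLoad_nonneg hb hx.1 i)).hasDerivAt
    have hline : HasDerivAt (fun δ : ℝ => primalLoad b x i + δ * c i) (c i) 0 := by
      simpa using ((hasDerivAt_id (0 : ℝ)).mul_const (c i)).const_add (primalLoad b x i)
    exact hM.comp 0 hline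
  have hmax : IsLocalMaxOn φ (Set.Ici 0) 0 := by
    filter_upwards [Icc_mem_nhdsGE (zero_lt_one' ℝ)] with δ hδ
    have h0 : shiftColumn x j i₀ 0 = x := by
      funext i j'; unfold shiftColumn; split_ifs with h <;> simp [h]
    simpa [φ, h0] using hopt _ (primalFeasible_shiftColumn hx j i₀ hδ.1 hδ.2)
  have hnonpos := hmax.hasDerivWithinAt_Ici_nonpos hderiv.hasDerivWithinAt
  have hexpand : ∑ i, deriv (M i) (primalLoad b x i) * c i =
      b i₀ j * deriv (M i₀) (primalLoad b x i₀) -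
        ∑ i, b i j * deriv (M i) (primalLoad b x i) * x i j := by
    simp only [c, mul_sub, mul_ite, mul_one, mul_zero, Finset.sum_sub_distrib,
      Finset.sum_ite_eq', Finset.mem_univ, if_true]
    congr 1
    · ring
    · exact Finset.sum_congr rfl fun i _ => by ring
  linarith

theorem exists_dualFeasible_dualObj_eq {x : Fin m → Fin n → ℝ} (hb : ∀ i j, 0 ≤ b i j)
    (hmono : ∀ i, MonotoneOn (M i) (Set.Ici 0)) (hconc : ∀ i, ConcaveOn ℝ (Set.Ici 0) (M i))
    (hdiff : ∀ i, ∀ t ∈ Set.Ici (0 : ℝ), DifferentiableAt ℝ (M i) t) (hx : primalFeasible x)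
    (hopt : ∀ x', primalFeasible x' → primalObj b M x' ≤ primalObj b M x) :
    ∃ v y, dualFeasible b M v y ∧ dualObj b M v y = primalObj b M x := by
  set v := primalLoad b x
  set g : Fin m → ℝ := fun i => deriv (M i) (v i)
  have hv i : 0 ≤ v i := primalLoad_nonneg hb hx.1 i
  have hg i : 0 ≤ g i :=
    (hmono i).deriv_nonneg_of_concaveOn (hconc i) (hv i) (hdiff i _ (hv i))
  refine ⟨v, fun j => ∑ i, b i j * g i * x i j, ⟨hv, fun j => ?_, fun i j => ?_⟩, ?_⟩
  · exact Finset.sum_nonneg fun i _ => mul_nonneg (mul_nonneg (hb i j) (hg i)) (hx.1 i j)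
  · exact mul_deriv_le_sum_of_optimal hb hdiff hx hopt i j
  · rw [dualObj, ← sum_mul_primalLoad, ← Finset.sum_add_distrib, primalObj_eq_sum_primalLoad]
    exact Finset.sum_congr rfl fun i _ => by ring

end Allocation

theorem strong_duality_general {m n : ℕ}
    (b : Fin m → Fin n → ℝ) (hb : ∀ i j, b i j ∈ Set.Icc (0 : ℝ) 1)
    (M : Fin m → ℝ → ℝ) (hM : GoodM M) (P D : ℝ)
    (hP : IsGreatest {p | ∃ x : Fin m → Fin n → ℝ, primalFeasible x ∧ p = primalObj b M x} P)
    (hD : IsGLB {d | ∃ v y, dualFeasible b M v y ∧ d = dualObj b M v y} D) :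
    P = D ∧ ∀ v y, dualFeasible b M v y → P ≤ dualObj b M v y := by
  have hb₀ i j : 0 ≤ b i j := (hb i j).1
  have hmono i := (hM i).1
  have hconc i := (hM i).2.1
  have hdiff i := (hM i).2.2.1
  obtain ⟨x, hx, rfl⟩ := hP.1
  have weak v y (hvy : dualFeasible b M v y) : primalObj b M x ≤ dualObj b M v y :=
    primalObj_le_dualObj hb₀ hconc hdiff hx hvy
  obtain ⟨v, y, hvy, hgap⟩ :=
    exists_dualFeasible_dualObj_eq hb₀ hmono hconc hdiff hx fun x' hx' => hP.2 ⟨x', hx', rfl⟩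
  have hleast : IsLeast {d | ∃ v y, dualFeasible b M v y ∧ d = dualObj b M v y}
      (primalObj b M x) := by
    refine ⟨⟨v, y, hvy, hgap.symm⟩, ?_⟩
    rintro _ ⟨v', y', hvy', rfl⟩
    exact weak v' y' hvy'
  exact ⟨hleast.isGLB.unique hD, weak⟩

/-- Strong duality `P* = D*`, and every dual feasible solution gives an upper
bound on `P*`. -/
theorem strong_duality {m n : ℕ} (hm : 0 < m) (hn : 0 < n)
    (b : Fin m → Fin n → ℝ) (hb : ∀ i j, b i j ∈ Set.Icc (0 : ℝ) 1)
    (M : Fin m → ℝ → ℝ) (hM : GoodM M) (P D : ℝ)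
    (hP : IsGreatest {p | ∃ x : Fin m → Fin n → ℝ, primalFeasible x ∧ p = primalObj b M x} P)
    (hD : IsGLB {d | ∃ v y, dualFeasible b M v y ∧ d = dualObj b M v y} D) :
    P = D ∧ ∀ v y, dualFeasible b M v y → P ≤ dualObj b M v y :=
  strong_duality_general b hb M hM P D hP hD
end
end

section
/- For every vector u ∈ ℝ^m with u ≥ 0, the optimal value OPT of the offline primal problem satisfies OPT ≤ Σ_{j=1}^n max_i {b_{ij} M_i'(u_i)} + Σ_{i=1}^m (M_i(u_i) − u_i·M_i'(u_i)). -/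
open Finset Real
open scoped Classical

noncomputable section

lemma tangent_le {f : ℝ → ℝ} {u s : ℝ} (hc : ConcaveOn ℝ (Set.Ici 0) f)
    (hd : DifferentiableAt ℝ f u) (hu : 0 ≤ u) (hs : 0 ≤ s) :
    f s ≤ f u + deriv f u * (s - u) := by
  have hten : Filter.Tendsto (slope f u) (nhdsWithin u {u}ᶜ) (nhds (deriv f u)) :=
    hasDerivAt_iff_tendsto_slope.mp hd.hasDerivAt
  have hcv : ConvexOn ℝ (Set.Ici 0) (-f) := hc.neg
  rcases lt_trichotomy s u with hlt | rfl | hgt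
  · -- s < u, so u > 0; show deriv f u ≤ slope f u s
    have key : deriv f u ≤ slope f u s := by
      have htl : Filter.Tendsto (slope f u) (nhdsWithin u (Set.Iio u)) (nhds (deriv f u)) :=
        hten.mono_left (nhdsWithin_mono _ (fun t ht => fun h => (ne_of_gt ht) h.symm))
      refine le_of_tendsto htl ?_
      · filter_upwards [Ioo_mem_nhdsLT_of_mem (Set.mem_Ioc.mpr ⟨hlt, le_refl u⟩)] with t ht
        have := hcv.secant_mono (a := u) (x := s) (y := t) (Set.mem_Ici.mpr hu)
          (Set.mem_Ici.mpr hs) (Set.mem_Ici.mpr (le_trans hs ht.1.le))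
          (ne_of_lt hlt) (ne_of_lt ht.2) ht.1.le
        simp only [Pi.neg_apply] at this
        have h1 : slope f u t ≤ slope f u s := by
          rw [slope_def_field, slope_def_field]
          have e1 : (-f s - -f u) / (s - u) = -((f s - f u)/(s-u)) := by ring
          have e2 : (-f t - -f u) / (t - u) = -((f t - f u)/(t-u)) := by ring
          rw [e1, e2] at this
          linarith
        exact h1
    have hsu : s - u < 0 := by linarith
    have := mul_le_mul_of_nonpos_right key hsu.le
    rw [slope_def_field] at this
    rw [div_mul_cancel₀] at this
    · linarith
    · exact sub_ne_zero.mpr (ne_of_lt hlt)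
  · simp
  · have key : slope f u s ≤ deriv f u := by
      have htl : Filter.Tendsto (slope f u) (nhdsWithin u (Set.Ioi u)) (nhds (deriv f u)) :=
        hten.mono_left (nhdsWithin_mono _ (fun t ht => fun h => (ne_of_gt ht) h))
      refine ge_of_tendsto htl ?_
      · filter_upwards [Ioo_mem_nhdsGT_of_mem (Set.mem_Ico.mpr ⟨le_refl u, hgt⟩)] with t ht
        have := hcv.secant_mono (a := u) (x := t) (y := s) (Set.mem_Ici.mpr hu)
          (Set.mem_Ici.mpr (le_trans hu ht.1.le)) (Set.mem_Ici.mpr hs)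
          (ne_of_gt ht.1) (ne_of_gt hgt) ht.2.le
        simp only [Pi.neg_apply] at this
        rw [slope_def_field]
        have e1 : (-f t - -f u) / (t - u) = -((f t - f u)/(t-u)) := by ring
        have e2 : (-f s - -f u) / (s - u) = -((f s - f u)/(s-u)) := by ring
        rw [e1, e2] at this
        have h2 : 0 < t - u := sub_pos.mpr ht.1
        calc (f s - f u)/(s - u) ≤ (f t - f u)/(t - u) := by linarith
        _ = slope f u t := (slope_def_field f u t).symm
    have hsu : 0 < s - u := by linarith
    have := mul_le_mul_of_nonneg_right key hsu.le
    rw [slope_def_field, div_mul_cancel₀] at this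
    · linarith
    · exact sub_ne_zero.mpr (ne_of_gt hgt)

lemma deriv_nonneg_of_monotoneOn {f : ℝ → ℝ} {u : ℝ} (hmono : MonotoneOn f (Set.Ici 0))
    (hd : DifferentiableAt ℝ f u) (hu : 0 ≤ u) : 0 ≤ deriv f u := by
  have hten : Filter.Tendsto (slope f u) (nhdsWithin u {u}ᶜ) (nhds (deriv f u)) :=
    hasDerivAt_iff_tendsto_slope.mp hd.hasDerivAt
  have htl : Filter.Tendsto (slope f u) (nhdsWithin u (Set.Ioi u)) (nhds (deriv f u)) :=
    hten.mono_left (nhdsWithin_mono _ (fun t ht => fun h => (ne_of_gt ht) h))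
  refine ge_of_tendsto htl ?_
  · filter_upwards [self_mem_nhdsWithin] with t ht
    rw [slope_def_field]
    apply div_nonneg _ (by simp at ht; linarith)
    have := hmono (Set.mem_Ici.mpr hu) (Set.mem_Ici.mpr (le_trans hu (le_of_lt ht))) (le_of_lt ht)
    linarith

lemma aux_main {m n : ℕ} (hm : 0 < m) (hn : 0 < n)
    (b : Fin m → Fin n → ℝ) (hb : ∀ i j, b i j ∈ Set.Icc (0 : ℝ) 1)
    (M : Fin m → ℝ → ℝ)
    (hM : GoodM M)
    (x : Fin m → Fin n → ℝ) (hx0 : ∀ i j, 0 ≤ x i j) (hx1 : ∀ j, ∑ i, x i j ≤ 1)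
    (u : Fin m → ℝ) (hu : ∀ i, 0 ≤ u i) :
    ∑ i, M i (∑ j, b i j * x i j) ≤ (∑ j, ⨆ i, b i j * deriv (M i) (u i)) +
      ∑ i, (M i (u i) - u i * deriv (M i) (u i)) := by
  set c : Fin m → ℝ := fun i => deriv (M i) (u i) with hc
  have hcnn : ∀ i, 0 ≤ c i := fun i =>
    deriv_nonneg_of_monotoneOn (hM i).1 ((hM i).2.2.1 (u i) (hu i)) (hu i)
  set s : Fin m → ℝ := fun i => ∑ j, b i j * x i j with hsdef
  have hsnn : ∀ i, 0 ≤ s i := fun i =>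
    Finset.sum_nonneg (fun j _ => mul_nonneg (hb i j).1 (hx0 i j))
  have h1 : ∀ i, M i (s i) ≤ M i (u i) + c i * (s i - u i) := fun i =>
    tangent_le (hM i).2.1 ((hM i).2.2.1 (u i) (hu i)) (hu i) (hsnn i)
  have h2 : ∑ i, c i * s i ≤ ∑ j, ⨆ i, b i j * c i := by
    have hrw : ∑ i, c i * s i = ∑ j, ∑ i, (b i j * c i) * x i j := by
      simp only [hsdef, Finset.mul_sum]
      rw [Finset.sum_comm]
      congr 1; ext j; congr 1; ext i; ring
    rw [hrw]
    apply Finset.sum_le_sum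
    intro j _
    have hbdd : BddAbove (Set.range (fun i => b i j * c i)) :=
      Set.Finite.bddAbove (Set.finite_range _)
    have hsupnn : 0 ≤ ⨆ i, b i j * c i := by
      refine le_trans (mul_nonneg (hb ⟨0, hm⟩ j).1 (hcnn ⟨0, hm⟩)) (le_ciSup hbdd ⟨0, hm⟩)
    calc ∑ i, (b i j * c i) * x i j ≤ ∑ i, (⨆ i', b i' j * c i') * x i j := by
          apply Finset.sum_le_sum
          intro i _
          exact mul_le_mul_of_nonneg_right (le_ciSup hbdd i) (hx0 i j)
      _ = (⨆ i', b i' j * c i') * ∑ i, x i j := by rw [Finset.mul_sum]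
      _ ≤ (⨆ i', b i' j * c i') * 1 := mul_le_mul_of_nonneg_left (hx1 j) hsupnn
      _ = _ := mul_one _
  calc ∑ i, M i (s i) ≤ ∑ i, (M i (u i) + c i * (s i - u i)) :=
        Finset.sum_le_sum (fun i _ => h1 i)
    _ = (∑ i, c i * s i) + ∑ i, (M i (u i) - u i * c i) := by
        rw [← Finset.sum_add_distrib]; congr 1; ext i; ring
    _ ≤ _ := by linarith [h2]


/-- For every `u ≥ 0`,
`OPT ≤ ∑_j max_i (b_{ij} M_i'(u_i)) + ∑_i (M_i(u_i) − u_i M_i'(u_i))`. -/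
theorem opt_dual_upper_bound {m n : ℕ} (hm : 0 < m) (hn : 0 < n)
    (b : Fin m → Fin n → ℝ) (hb : ∀ i j, b i j ∈ Set.Icc (0 : ℝ) 1)
    (M : Fin m → ℝ → ℝ) (hM : GoodM M)
    (OPT : ℝ) (hOPT : IsOPT b M OPT)
    (u : Fin m → ℝ) (hu : ∀ i, 0 ≤ u i) :
    OPT ≤ (∑ j, ⨆ i, b i j * deriv (M i) (u i)) +
      ∑ i, (M i (u i) - u i * deriv (M i) (u i)) := by
  obtain ⟨⟨x, ⟨hx0, hx1⟩, hxe⟩, _⟩ := hOPT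
  rw [hxe]
  exact aux_main hm hn b hb M hM x hx0 hx1 u hu
end
end

section
/- Let M : [0,∞) → ℝ be nondecreasing, concave, and differentiable with M(0) = 0, and let ε ∈ (0, 1/2). If û > 0 and ū satisfy (1−ε)·û ≤ ū ≤ (1+ε)·û, then M(û) − M(ū) + (ū − û)·M'(û) ≤ 2ε·M(ū). -/
open Real

/-!
Write `d = M'(û)`. If `ū ≥ û`, then `M(û) ≤ M(ū)`, and the tangent at `û` lies above the chord
from `0`, so `û d ≤ M(û)`; hence `(ū - û) d ≤ ε û d ≤ ε M(ū)`. If `ū < û`, then `(ū - û) d ≤ 0`,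
and since the slopes of `M` decrease, `M(û) - M(ū) ≤ (û - ū) M(ū) / ū ≤ 2ε M(ū)`, using
`ū ≥ (1 - ε) û ≥ û / 2`.
-/

namespace ConcaveOn

variable {S : Set ℝ} {f : ℝ → ℝ} {x y z : ℝ}

theorem mul_deriv_le_sub (hf : ConcaveOn ℝ S f) (hx : x ∈ S) (hy : y ∈ S) (hxy : x < y)
    (hd : DifferentiableAt ℝ f y) : (y - x) * deriv f y ≤ f y - f x := by
  have h := hf.deriv_le_slope hx hy hxy hd
  rw [slope_def_field, le_div_iff₀ (sub_pos.mpr hxy)] at h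
  linarith

theorem sub_le_div_mul_sub (hf : ConcaveOn ℝ S f) (hx : x ∈ S) (hz : z ∈ S) (hxy : x < y)
    (hyz : y < z) : f z - f y ≤ (z - y) / (y - x) * (f y - f x) := by
  have h := hf.slope_anti_adjacent hx hz hxy hyz
  rw [div_le_iff₀ (sub_pos.mpr hyz)] at h
  exact h.trans_eq (by ring)

end ConcaveOn

theorem MonotoneOn.deriv_nonneg_of_mem_Ici {f : ℝ → ℝ} {a x : ℝ}
    (hf : MonotoneOn f (Set.Ici a)) (hx : x ∈ Set.Ici a) (hd : DifferentiableAt ℝ f x) :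
    0 ≤ deriv f x :=
  hd.derivWithin (uniqueDiffOn_Ici a x hx) ▸ hf.derivWithin_nonneg

theorem concave_gap_bound_general (M : ℝ → ℝ)
    (hmono : MonotoneOn M (Set.Ici 0))
    (hconc : ConcaveOn ℝ (Set.Ici 0) M)
    (hdiff : ∀ x ∈ Set.Ici (0 : ℝ), DifferentiableAt ℝ M x)
    (h0 : M 0 = 0)
    (ε : ℝ) (hε : ε ∈ Set.Ioo (0 : ℝ) (1/2))
    (uh ub : ℝ) (huh : 0 < uh)
    (h1 : (1 - ε) * uh ≤ ub) (h2 : ub ≤ (1 + ε) * uh) :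
    M uh - M ub + (ub - uh) * deriv M uh ≤ 2 * ε * M ub := by
  obtain ⟨hε0, hε1⟩ := hε
  have hub : 0 < ub := lt_of_lt_of_le (mul_pos (by linarith) huh) h1
  have huh_mem : uh ∈ Set.Ici (0 : ℝ) := huh.le
  have hub_mem : ub ∈ Set.Ici (0 : ℝ) := hub.le
  have hMub : 0 ≤ M ub := h0 ▸ hmono Set.self_mem_Ici hub_mem hub.le
  have hd : 0 ≤ deriv M uh := hmono.deriv_nonneg_of_mem_Ici huh_mem (hdiff uh huh_mem)
  rcases le_or_gt uh ub with hle | hlt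
  · have htangent : uh * deriv M uh ≤ M uh := by
      simpa [h0] using hconc.mul_deriv_le_sub Set.self_mem_Ici huh_mem huh (hdiff uh huh_mem)
    have hgap : (ub - uh) * deriv M uh ≤ ε * (uh * deriv M uh) := by
      rw [← mul_assoc]
      exact mul_le_mul_of_nonneg_right (by linarith) hd
    have hMle : M uh ≤ M ub := hmono huh_mem hub_mem hle
    calc M uh - M ub + (ub - uh) * deriv M uh ≤ ε * (uh * deriv M uh) := by linarith
      _ ≤ ε * M ub := mul_le_mul_of_nonneg_left (htangent.trans hMle) hε0.le
      _ ≤ 2 * ε * M ub := by linarith [mul_nonneg hε0.le hMub]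
  · have hchord : M uh - M ub ≤ (uh - ub) / ub * M ub := by
      simpa [h0] using hconc.sub_le_div_mul_sub Set.self_mem_Ici huh_mem hub hlt
    have hratio : (uh - ub) / ub ≤ 2 * ε := by
      rw [div_le_iff₀ hub]
      nlinarith
    have hneg : (ub - uh) * deriv M uh ≤ 0 := mul_nonpos_of_nonpos_of_nonneg (by linarith) hd
    calc M uh - M ub + (ub - uh) * deriv M uh ≤ (uh - ub) / ub * M ub := by linarith
      _ ≤ 2 * ε * M ub := mul_le_mul_of_nonneg_right hratio hMub

/-- For a nondecreasing, concave, differentiable `M` on `[0,∞)` with `M 0 = 0`,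
ε ∈ (0,1/2), `û > 0`, `ū ≥ 0` with `(1−ε) û ≤ ū ≤ (1+ε) û`, one has
`M(û) − M(ū) + (ū − û) M'(û) ≤ 2ε M(ū)`. -/
theorem concave_gap_bound (M : ℝ → ℝ)
    (hmono : MonotoneOn M (Set.Ici 0))
    (hconc : ConcaveOn ℝ (Set.Ici 0) M)
    (hdiff : ∀ x ∈ Set.Ici (0 : ℝ), DifferentiableAt ℝ M x)
    (h0 : M 0 = 0)
    (ε : ℝ) (hε : ε ∈ Set.Ioo (0 : ℝ) (1/2))
    (uh ub : ℝ) (huh : 0 < uh) (hub : 0 ≤ ub)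
    (h1 : (1 - ε) * uh ≤ ub) (h2 : ub ≤ (1 + ε) * uh) :
    M uh - M ub + (ub - uh) * deriv M uh ≤ 2 * ε * M ub :=
  concave_gap_bound_general M hmono hconc hdiff h0 ε hε uh ub huh h1 h2
end

section
/- (Hoeffding–Bernstein inequality for sampling without replacement.) Let u_1, …, u_r be random samples drawn without replacement from the real numbers {c_1, …, c_R}. Then for every t > 0: P(|Σ_{i=1}^r u_i − r·c̄| ≥ t) ≤ 2·exp(−t² / (2r·σ_R² + t·Δ_R)), where Δ_R = max_i c_i − min_i c_i, c̄ = (1/R)·Σ_{i=1}^R c_i, and σ_R² = (1/R)·Σ_{i=1}^R (c_i − c̄)². -/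
open Finset Real
open scoped Classical

noncomputable section

/-!
Chernoff's method, with Hoeffding's comparison between sampling without and with replacement.
For nonnegative weights `a`, the expected product of `a` over the first `#s` positions of a
random permutation is at most `(mean a) ^ #s`: when a position `i` is added to the window `s`,
every other position `m` carries at least the weight of `i` on average, by the swap `(i m)` if
`m ∉ s` and by that swap together with `xy ≤ (x² + y²)/2` if `m ∈ s`; averaging over `m` gives
the factor `mean a`. For `a = exp (l b)` with `b` centred and `|b| ≤ Δ`, the bound
`exp x ≤ 1 + x + x² / (2 - u)` on `|x| ≤ u < 2` gives `mean a ≤ exp (l² V / (2 - l Δ))`, and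
`l = 2t / (2rV + tΔ)` turns the Chernoff bound into `exp (-t² / (2rV + tΔ))`.
-/

namespace Real

theorem exp_le_one_add_add_sq_div_two {x : ℝ} (hx : x ≤ 0) : exp x ≤ 1 + x + x ^ 2 / 2 := by
  have hanti : AntitoneOn (fun y => 1 + y + y ^ 2 / 2 - exp y) (Set.Iic 0) := by
    refine antitoneOn_of_hasDerivWithinAt_nonpos (convex_Iic 0) (by fun_prop)
      (f' := fun y => 1 + y - exp y) (fun y _ => ?_) fun y _ => by linarith [add_one_le_exp y]
    have := (((hasDerivAt_id' y).const_add 1).add ((hasDerivAt_pow 2 y).div_const 2)).sub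
      (hasDerivAt_exp y)
    exact (this.congr_deriv (by norm_num)).hasDerivWithinAt
  have := hanti hx Set.self_mem_Iic hx
  simp only [exp_zero] at this
  linarith

theorem exp_le_one_add_add_sq_div_two_sub {x u : ℝ} (hxu : |x| ≤ u) (hu : u < 2) :
    exp x ≤ 1 + x + x ^ 2 / (2 - u) := by
  rcases le_or_gt 0 x with hx | hx
  · have hxu' : x ≤ u := (le_abs_self x).trans hxu
    calc exp x ≤ (2 + x) / (2 - x) := exp_le_two_add_div_two_sub hx (by linarith)
      _ = 1 + x + x ^ 2 / (2 - x) := by field_simp [show 2 - x ≠ 0 by linarith]; ring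
      _ ≤ 1 + x + x ^ 2 / (2 - u) := by gcongr
  · have hu₀ : 0 ≤ u := (abs_nonneg x).trans hxu
    calc exp x ≤ 1 + x + x ^ 2 / 2 := exp_le_one_add_add_sq_div_two hx.le
      _ ≤ 1 + x + x ^ 2 / (2 - u) := by gcongr; linarith

end Real

namespace Equiv.Perm

variable {α : Type*} [Fintype α] [DecidableEq α]

theorem sum_prod_apply_mul_apply_eq_of_notMem {s : Finset α} {i m : α} (hi : i ∉ s)
    (hm : m ∉ s) (a g : α → ℝ) :
    ∑ σ : Perm α, (∏ j ∈ s, a (σ j)) * g (σ i) = ∑ σ : Perm α, (∏ j ∈ s, a (σ j)) * g (σ m) := by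
  refine Fintype.sum_equiv (Equiv.mulRight (swap i m)) _ _ fun σ => ?_
  have hfix : ∀ j ∈ s, a (σ (swap i m j)) = a (σ j) := fun j hj => by
    rw [swap_apply_of_ne_of_ne (ne_of_mem_of_not_mem hj hi) (ne_of_mem_of_not_mem hj hm)]
  simp only [coe_mulRight, mul_apply, swap_apply_right, prod_congr rfl hfix]

theorem sum_prod_apply_mul_apply_le {a : α → ℝ} (ha : ∀ x, 0 ≤ a x) {s : Finset α} {i : α}
    (hi : i ∉ s) (m : α) :
    ∑ σ : Perm α, (∏ j ∈ s, a (σ j)) * a (σ i) ≤ ∑ σ : Perm α, (∏ j ∈ s, a (σ j)) * a (σ m) := by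
  by_cases hm : m ∈ s
  · set G : Perm α → ℝ := fun σ => ∏ j ∈ s.erase m, a (σ j)
    have hsplit : ∀ σ : Perm α, ∏ j ∈ s, a (σ j) = G σ * a (σ m) := fun σ =>
      (mul_prod_erase s _ hm).symm.trans (mul_comm _ _)
    have hsym : ∑ σ : Perm α, G σ * a (σ i) ^ 2 = ∑ σ : Perm α, G σ * a (σ m) ^ 2 :=
      sum_prod_apply_mul_apply_eq_of_notMem (fun h => hi (mem_of_mem_erase h))
        (notMem_erase m s) a (fun x => a x ^ 2)
    calc ∑ σ : Perm α, (∏ j ∈ s, a (σ j)) * a (σ i)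
        = ∑ σ : Perm α, G σ * (a (σ m) * a (σ i)) := by simp only [hsplit, mul_assoc]
      _ ≤ ∑ σ : Perm α, G σ * ((a (σ m) ^ 2 + a (σ i) ^ 2) / 2) := by
        gcongr with σ
        · exact prod_nonneg fun j _ => ha _
        · nlinarith [sq_nonneg (a (σ m) - a (σ i))]
      _ = (∑ σ : Perm α, G σ * a (σ i) ^ 2 + ∑ σ : Perm α, G σ * a (σ m) ^ 2) / 2 := by
        rw [← sum_add_distrib, sum_div]
        exact sum_congr rfl fun σ _ => by ring
      _ = ∑ σ : Perm α, (∏ j ∈ s, a (σ j)) * a (σ m) := by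
        rw [hsym, add_self_div_two]
        simp only [hsplit, sq, mul_assoc]
  · exact (sum_prod_apply_mul_apply_eq_of_notMem hi hm a a).le

theorem card_mul_sum_prod_apply_mul_apply_le {a : α → ℝ} (ha : ∀ x, 0 ≤ a x) {s : Finset α}
    {i : α} (hi : i ∉ s) :
    Fintype.card α * ∑ σ : Perm α, (∏ j ∈ s, a (σ j)) * a (σ i) ≤
      (∑ x, a x) * ∑ σ : Perm α, ∏ j ∈ s, a (σ j) :=
  calc Fintype.card α * ∑ σ : Perm α, (∏ j ∈ s, a (σ j)) * a (σ i)
      = ∑ _m : α, ∑ σ : Perm α, (∏ j ∈ s, a (σ j)) * a (σ i) := by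
        rw [sum_const, card_univ, nsmul_eq_mul]
    _ ≤ ∑ m : α, ∑ σ : Perm α, (∏ j ∈ s, a (σ j)) * a (σ m) :=
        sum_le_sum fun m _ => sum_prod_apply_mul_apply_le ha hi m
    _ = (∑ x, a x) * ∑ σ : Perm α, ∏ j ∈ s, a (σ j) := by
        rw [sum_comm, mul_sum]
        refine sum_congr rfl fun σ _ => ?_
        rw [← mul_sum, Equiv.sum_comp σ a, mul_comm]

theorem sum_prod_apply_le {a : α → ℝ} (ha : ∀ x, 0 ≤ a x) (s : Finset α) :
    ∑ σ : Perm α, ∏ j ∈ s, a (σ j) ≤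
      (Fintype.card α).factorial * ((∑ x, a x) / Fintype.card α) ^ #s := by
  induction s using Finset.induction_on with
  | empty => simp [Fintype.card_perm]
  | insert i s hi ih =>
    have hcard : (0 : ℝ) < Fintype.card α := by exact_mod_cast Fintype.card_pos_iff.mpr ⟨i⟩
    have hmean : 0 ≤ (∑ x, a x) / Fintype.card α := by
      have := sum_nonneg fun x (_ : x ∈ univ) => ha x
      positivity
    calc ∑ σ : Perm α, ∏ j ∈ insert i s, a (σ j)
        = ∑ σ : Perm α, (∏ j ∈ s, a (σ j)) * a (σ i) := by
          simp only [prod_insert hi, mul_comm]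
      _ ≤ (∑ x, a x) / Fintype.card α * ∑ σ : Perm α, ∏ j ∈ s, a (σ j) := by
          rw [div_mul_eq_mul_div, le_div_iff₀ hcard, mul_comm]
          exact card_mul_sum_prod_apply_mul_apply_le ha hi
      _ ≤ (∑ x, a x) / Fintype.card α *
            ((Fintype.card α).factorial * ((∑ x, a x) / Fintype.card α) ^ #s) := by gcongr
      _ = (Fintype.card α).factorial * ((∑ x, a x) / Fintype.card α) ^ #(insert i s) := by
          rw [card_insert_of_notMem hi]; ring

end Equiv.Perm

theorem card_filter_ge_le_exp_mul_sum_exp {Ω : Type*} [Fintype Ω] (S : Ω → ℝ) (t : ℝ) {l : ℝ}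
    (hl : 0 ≤ l) : (#{ω | t ≤ S ω} : ℝ) ≤ exp (-(l * t)) * ∑ ω, exp (l * S ω) :=
  calc (#{ω | t ≤ S ω} : ℝ) = ∑ ω ∈ {ω | t ≤ S ω}, (1 : ℝ) := by simp
    _ ≤ ∑ ω ∈ {ω | t ≤ S ω}, exp (l * (S ω - t)) := sum_le_sum fun ω hω =>
        one_le_exp (mul_nonneg hl (sub_nonneg.mpr (mem_filter.mp hω).2))
    _ ≤ ∑ ω, exp (l * (S ω - t)) :=
        sum_le_sum_of_subset_of_nonneg (filter_subset _ _) fun _ _ _ => (exp_pos _).le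
    _ = exp (-(l * t)) * ∑ ω, exp (l * S ω) := by
        rw [mul_sum]
        exact sum_congr rfl fun ω _ => by rw [← exp_add]; ring_nf

theorem sum_exp_mul_div_card_le {ι : Type*} [Fintype ι] [Nonempty ι] {b : ι → ℝ}
    (hb : ∑ i, b i = 0) {Δ l : ℝ} (hΔ : ∀ i, |b i| ≤ Δ) (hl : 0 ≤ l) (hlΔ : l * Δ < 2) :
    (∑ i, exp (l * b i)) / Fintype.card ι ≤
      exp (l ^ 2 * ((∑ i, b i ^ 2) / Fintype.card ι) / (2 - l * Δ)) := by
  have hterm (i : ι) : exp (l * b i) ≤ 1 + l * b i + l ^ 2 * b i ^ 2 / (2 - l * Δ) := by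
    rw [← mul_pow]
    refine exp_le_one_add_add_sq_div_two_sub ?_ hlΔ
    rw [abs_mul, abs_of_nonneg hl]
    exact mul_le_mul_of_nonneg_left (hΔ i) hl
  have hcard : (Fintype.card ι : ℝ) ≠ 0 := by exact_mod_cast Fintype.card_ne_zero
  calc (∑ i, exp (l * b i)) / Fintype.card ι
      ≤ (∑ i, (1 + l * b i + l ^ 2 * b i ^ 2 / (2 - l * Δ))) / Fintype.card ι := by
        gcongr with i; exact hterm i
    _ = 1 + l ^ 2 * ((∑ i, b i ^ 2) / Fintype.card ι) / (2 - l * Δ) := by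
        rw [sum_add_distrib, sum_add_distrib, ← mul_sum, hb, ← sum_div, ← mul_sum]
        field_simp
        simp
    _ ≤ exp (l ^ 2 * ((∑ i, b i ^ 2) / Fintype.card ι) / (2 - l * Δ)) := by
        linarith [add_one_le_exp (l ^ 2 * ((∑ i, b i ^ 2) / Fintype.card ι) / (2 - l * Δ))]

namespace Equiv.Perm

variable {α : Type*} [Fintype α] [DecidableEq α] {b : α → ℝ} {Δ : ℝ}

theorem card_filter_sum_ge_le_exp [Nonempty α] (hb : ∑ x, b x = 0) (hΔ : ∀ x, |b x| ≤ Δ)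
    {l : ℝ} (hl : 0 ≤ l) (hlΔ : l * Δ < 2) (s : Finset α) (t : ℝ) :
    (#{σ : Perm α | t ≤ ∑ j ∈ s, b (σ j)} : ℝ) ≤ (Fintype.card α).factorial *
      exp (-(l * t) + #s * (l ^ 2 * ((∑ x, b x ^ 2) / Fintype.card α) / (2 - l * Δ))) := by
  set Q := l ^ 2 * ((∑ x, b x ^ 2) / Fintype.card α) / (2 - l * Δ)
  calc (#{σ : Perm α | t ≤ ∑ j ∈ s, b (σ j)} : ℝ)
      ≤ exp (-(l * t)) * ∑ σ : Perm α, exp (l * ∑ j ∈ s, b (σ j)) :=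
        card_filter_ge_le_exp_mul_sum_exp _ t hl
    _ = exp (-(l * t)) * ∑ σ : Perm α, ∏ j ∈ s, exp (l * b (σ j)) := by
        simp only [mul_sum, exp_sum]
    _ ≤ exp (-(l * t)) *
          ((Fintype.card α).factorial * ((∑ x, exp (l * b x)) / Fintype.card α) ^ #s) := by
        gcongr
        exact sum_prod_apply_le (a := fun x => exp (l * b x)) (fun x => (exp_pos _).le) s
    _ ≤ exp (-(l * t)) * ((Fintype.card α).factorial * exp Q ^ #s) := by
        gcongr
        exact sum_exp_mul_div_card_le hb hΔ hl hlΔ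
    _ = (Fintype.card α).factorial * exp (-(l * t) + #s * Q) := by
        rw [← exp_nat_mul, exp_add]; ring

theorem card_filter_sum_ge_le (hb : ∑ x, b x = 0) (hΔ : ∀ x, |b x| ≤ Δ) (s : Finset α)
    {t : ℝ} (ht : 0 < t) :
    (#{σ : Perm α | t ≤ ∑ j ∈ s, b (σ j)} : ℝ) ≤ (Fintype.card α).factorial *
      exp (-(t ^ 2) / (2 * #s * ((∑ x, b x ^ 2) / Fintype.card α) + t * Δ)) := by
  set V := (∑ x, b x ^ 2) / Fintype.card α with hV
  set D := 2 * #s * V + t * Δ with hD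
  rcases (show 0 ≤ (#s : ℝ) * V by positivity).eq_or_lt with hsV | hsV
  · have hzero (σ : Perm α) : ∑ j ∈ s, b (σ j) = 0 := by
      rcases s.eq_empty_or_nonempty with rfl | ⟨j₀, hj₀⟩
      · exact sum_empty
      have : Nonempty α := ⟨j₀⟩
      have hb2 : ∑ x, b x ^ 2 = 0 := by
        simpa [hV, Fintype.card_ne_zero, ne_empty_of_mem hj₀] using hsV.symm
      have hb0 (x : α) : b x = 0 := pow_eq_zero_iff two_ne_zero |>.mp <|
        (sum_eq_zero_iff_of_nonneg fun x _ => sq_nonneg (b x)).mp hb2 x (mem_univ x)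
      simp [hb0]
    simp only [hzero, ht.not_ge, filter_false, card_empty, Nat.cast_zero]
    positivity
  obtain ⟨j₀, -⟩ : s.Nonempty := by
    rw [nonempty_iff_ne_empty]; rintro rfl; simp at hsV
  have : Nonempty α := ⟨j₀⟩
  have hΔ₀ : 0 ≤ Δ := (abs_nonneg _).trans (hΔ j₀)
  have hDpos : 0 < D := by nlinarith [mul_nonneg ht.le hΔ₀]
  obtain ⟨l, hl⟩ : ∃ l, l = 2 * t / D := ⟨_, rfl⟩
  have hgap : 2 - l * Δ = 4 * #s * V / D := by
    rw [hl]; field_simp; linarith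
  have hlΔ : l * Δ < 2 := by
    have : 0 < 4 * #s * V / D := div_pos (by linarith) hDpos
    linarith
  obtain ⟨hs₀, hV₀⟩ := mul_ne_zero_iff.mp hsV.ne'
  have hexp : -(l * t) + #s * (l ^ 2 * V / (2 - l * Δ)) = -(t ^ 2) / D := by
    rw [hgap, hl]; field_simp; ring
  have key := card_filter_sum_ge_le_exp hb hΔ (hl ▸ by positivity) hlΔ s t
  rwa [← hV, hexp] at key

theorem card_filter_abs_sum_ge_le (hb : ∑ x, b x = 0) (hΔ : ∀ x, |b x| ≤ Δ) (s : Finset α)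
    {t : ℝ} (ht : 0 < t) :
    (#{σ : Perm α | t ≤ |∑ j ∈ s, b (σ j)|} : ℝ) ≤ 2 * ((Fintype.card α).factorial *
      exp (-(t ^ 2) / (2 * #s * ((∑ x, b x ^ 2) / Fintype.card α) + t * Δ))) := by
  have hneg := card_filter_sum_ge_le (b := fun x => -b x) (by simp [sum_neg_distrib, hb])
    (by simpa using hΔ) s ht
  simp only [neg_sq, sum_neg_distrib] at hneg
  calc (#{σ : Perm α | t ≤ |∑ j ∈ s, b (σ j)|} : ℝ)
      ≤ #{σ : Perm α | t ≤ ∑ j ∈ s, b (σ j)} + #{σ : Perm α | t ≤ -∑ j ∈ s, b (σ j)} := by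
        simp only [le_abs, filter_or]
        exact_mod_cast card_union_le _ _
    _ ≤ _ := by linarith [card_filter_sum_ge_le hb hΔ s ht]

end Equiv.Perm

theorem sum_sub_avg_eq_zero {ι : Type*} [Fintype ι] (c : ι → ℝ) :
    ∑ i, (c i - (∑ j, c j) / Fintype.card ι) = 0 := by
  rcases isEmpty_or_nonempty ι with hι | hι
  · simp
  · rw [sum_sub_distrib, sum_const, card_univ, nsmul_eq_mul,
      mul_div_cancel₀ _ (by exact_mod_cast Fintype.card_ne_zero), sub_self]

theorem abs_sub_avg_le_ciSup_sub_ciInf {ι : Type*} [Fintype ι] (c : ι → ℝ) (i : ι) :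
    |c i - (∑ j, c j) / Fintype.card ι| ≤ (⨆ j, c j) - ⨅ j, c j := by
  have : Nonempty ι := ⟨i⟩
  have hcard : (0 : ℝ) < Fintype.card ι := by exact_mod_cast Fintype.card_pos
  have hsup (j : ι) : c j ≤ ⨆ j, c j := le_ciSup (Set.finite_range c).bddAbove j
  have hinf (j : ι) : (⨅ j, c j) ≤ c j := ciInf_le (Set.finite_range c).bddBelow j
  have havg_le : (∑ j, c j) / Fintype.card ι ≤ ⨆ j, c j := by
    rw [div_le_iff₀ hcard, mul_comm, ← nsmul_eq_mul, ← card_univ]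
    exact sum_le_card_nsmul _ _ _ fun j _ => hsup j
  have hle_avg : (⨅ j, c j) ≤ (∑ j, c j) / Fintype.card ι := by
    rw [le_div_iff₀ hcard, mul_comm, ← nsmul_eq_mul, ← card_univ]
    exact card_nsmul_le_sum _ _ _ fun j _ => hinf j
  rw [abs_sub_le_iff]
  constructor <;> linarith [hsup i, hinf i]

theorem hoeffding_bernstein_sampling_general (R r : ℕ) (hrR : r ≤ R)
    (c : Fin R → ℝ) (t : ℝ) (ht : 0 < t) :
    permProb R (fun σ =>
      t ≤ |(∑ j : Fin R, if (j : ℕ) < r then c (σ j) else 0) -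
            (r : ℝ) * ((∑ i, c i) / (R : ℝ))|) ≤
    2 * Real.exp (-(t ^ 2) /
      (2 * (r : ℝ) * ((∑ i, (c i - (∑ i', c i') / (R : ℝ)) ^ 2) / (R : ℝ)) +
        t * ((⨆ i, c i) - ⨅ i, c i))) := by
  set μ := (∑ i, c i) / (R : ℝ)
  set W : Finset (Fin R) := {j | (j : ℕ) < r}
  have hW : #W = r := by simp [W, Fin.card_filter_val_lt, hrR]
  have hdev (σ : Equiv.Perm (Fin R)) :
      (∑ j : Fin R, if (j : ℕ) < r then c (σ j) else 0) - r * μ = ∑ j ∈ W, (c (σ j) - μ) := by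
    rw [sum_sub_distrib, sum_const, hW, nsmul_eq_mul, sum_filter]
  have key := Equiv.Perm.card_filter_abs_sum_ge_le (b := fun i => c i - μ)
    (by simpa using sum_sub_avg_eq_zero c) (by simpa using abs_sub_avg_le_ciSup_sub_ciInf c) W ht
  rw [Fintype.card_fin, hW] at key
  simp only [hdev]
  unfold permProb
  rw [div_le_iff₀ (by positivity)]
  linarith

/-- Hoeffding–Bernstein inequality for sampling without replacement:
if `u_1,…,u_r` are the first `r` values of a uniformly random permutation of `c_1,…,c_R`,
then `P(|∑ u_i − r c̄| ≥ t) ≤ 2 exp(−t²/(2r σ_R² + t Δ_R))`. -/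
theorem hoeffding_bernstein_sampling (R r : ℕ) (hr : 1 ≤ r) (hrR : r ≤ R)
    (c : Fin R → ℝ) (t : ℝ) (ht : 0 < t) :
    permProb R (fun σ =>
      t ≤ |(∑ j : Fin R, if (j : ℕ) < r then c (σ j) else 0) -
            (r : ℝ) * ((∑ i, c i) / (R : ℝ))|) ≤
    2 * Real.exp (-(t ^ 2) /
      (2 * (r : ℝ) * ((∑ i, (c i - (∑ i', c i') / (R : ℝ)) ^ 2) / (R : ℝ)) +
        t * ((⨆ i, c i) - ⨅ i, c i))) :=
  hoeffding_bernstein_sampling_general R r hrR c t ht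
end
end

section
/- Let δ ∈ (0, 1/2) and suppose nonnegative reals û_i > 0, ũ_i, w_i (i = 1,…,m) satisfy, for all i: (1 − δ)·û_i ≤ ũ_i and ũ_i − w_i ≤ 2δ·û_i. Then for nondecreasing, concave, differentiable functions M_i with M_i(0) = 0 and any real V with Σ_{i=1}^m M_i(ũ_i) ≤ V, one has Σ_{i=1}^m M_i(ũ_i) − Σ_{i=1}^m M_i(w_i) ≤ 4δ·V. -/
open Finset Real

/-- Let δ ∈ (0,1/2) and nonnegative reals `û_i > 0, ũ_i, w_i` satisfy
`(1−δ) û_i ≤ ũ_i` and `ũ_i − w_i ≤ 2δ û_i` for all i. Then for nondecreasing, concave,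
differentiable `M_i` with `M_i(0) = 0` and any `V` with `∑ M_i(ũ_i) ≤ V`, one has
`∑ M_i(ũ_i) − ∑ M_i(w_i) ≤ 4δ V`. -/
theorem sum_concave_gap_bound {m : ℕ} (δ : ℝ) (hδ : δ ∈ Set.Ioo (0 : ℝ) (1/2))
    (uh ut w : Fin m → ℝ)
    (huh : ∀ i, 0 < uh i) (hut : ∀ i, 0 ≤ ut i) (hw : ∀ i, 0 ≤ w i)
    (h1 : ∀ i, (1 - δ) * uh i ≤ ut i) (h2 : ∀ i, ut i - w i ≤ 2 * δ * uh i)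
    (M : Fin m → ℝ → ℝ)
    (hM : ∀ i, MonotoneOn (M i) (Set.Ici 0) ∧ ConcaveOn ℝ (Set.Ici 0) (M i) ∧
      (∀ x ∈ Set.Ici (0 : ℝ), DifferentiableAt ℝ (M i) x) ∧ M i 0 = 0)
    (V : ℝ) (hV : ∑ i, M i (ut i) ≤ V) :
    ∑ i, M i (ut i) - ∑ i, M i (w i) ≤ 4 * δ * V := by
  obtain ⟨hδ0, hδ2⟩ := hδ
  -- each M i (ut i) ≥ 0
  have hMnn : ∀ i, 0 ≤ M i (ut i) := by
    intro i
    obtain ⟨hmono, hconc, hdiff, h0⟩ := hM i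
    have := hmono (by simp) (Set.mem_Ici.mpr (hut i)) (hut i)
    linarith [this]
  -- key per-index bound
  have key : ∀ i, M i (ut i) - M i (w i) ≤ 4 * δ * M i (ut i) := by
    intro i
    obtain ⟨hmono, hconc, hdiff, h0⟩ := hM i
    by_cases hcase : ut i ≤ w i
    · have := hmono (Set.mem_Ici.mpr (hut i)) (Set.mem_Ici.mpr (hw i)) hcase
      have := hMnn i
      nlinarith
    · push_neg at hcase
      have hupos : 0 < ut i := lt_of_le_of_lt (hw i) hcase
      -- ut i - w i ≤ 4 δ ut i
      have hbd : ut i - w i ≤ 4 * δ * ut i := by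
        nlinarith [h1 i, h2 i, huh i]
      set b : ℝ := w i / ut i with hb
      have hb0 : 0 ≤ b := div_nonneg (hw i) hupos.le
      have hb1 : b ≤ 1 := (div_le_one hupos).mpr hcase.le
      have hcvx := hconc.2 (Set.mem_Ici.mpr (le_refl (0:ℝ)))
        (Set.mem_Ici.mpr (hut i)) (by linarith : (0:ℝ) ≤ 1 - b) hb0 (by ring)
      have hsmul : b * ut i = w i := div_mul_cancel₀ _ hupos.ne'
      simp only [smul_eq_mul, h0, mul_zero, zero_add, hsmul, smul_zero] at hcvx
      -- M(ut) - M(w) ≤ (1-b) M(ut) = ((ut-w)/ut) M(ut) ≤ 4δ M(ut)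
      have h1b : (1 - b) * ut i = ut i - w i := by
        rw [sub_mul, one_mul, hsmul]
      have hMn := hMnn i
      nlinarith [mul_le_mul_of_nonneg_right hbd hMn]
  calc ∑ i, M i (ut i) - ∑ i, M i (w i)
      = ∑ i, (M i (ut i) - M i (w i)) := by rw [Finset.sum_sub_distrib]
    _ ≤ ∑ i, 4 * δ * M i (ut i) := Finset.sum_le_sum fun i _ => key i
    _ = 4 * δ * ∑ i, M i (ut i) := by rw [Finset.mul_sum]
    _ ≤ 4 * δ * V := by nlinarith
end

section
/- Let the arrival order of the n columns be a uniformly random permutation. For any fixed i ∈ {1,…,m} and any integer 1 ≤ ℓ ≤ n: P( |Σ_{j=1}^{ℓ} b_{i,σ(j)} − (ℓ/n)·Σ_{j=1}^n b_{ij}| ≥ ℓ·b̄/2 ) ≤ 2·exp(−ℓ·b̄²/12), where σ is the random permutation, b̄ = (1/n)·min_i Σ_{j=1}^n b_{ij}, and the sum Σ_{j=1}^{ℓ} b_{i,σ(j)} is over the first ℓ arrivals. -/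
/-! By convexity of `exp`, a zero-sum family `w` with values in `[-1, 1]` satisfies
`∑ exp (s w) ≤ card · cosh s ≤ card · exp (s² / 2)`. Revealing the first arrival of a uniformly
random permutation and applying this bound to the centered remaining values shows, by induction
on `ℓ`, that the centered sum of the first `ℓ` arrivals has moment generating function at most
`exp (λ² ℓ / 2)`. Chernoff's bound at `λ = b̄ / 2`, applied to both tails, then gives
`2 exp (-ℓ b̄² / 8) ≤ 2 exp (-ℓ b̄² / 12)`. -/

open Finset Real
open scoped Classical Nat

noncomputable section

lemma exp_mul_le_cosh_add_mul_sinh (s : ℝ) {y : ℝ} (hy : |y| ≤ 1) :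
    exp (s * y) ≤ cosh s + y * sinh s := by
  obtain ⟨hy₁, hy₂⟩ := abs_le.mp hy
  have hconv := convexOn_exp.2 (Set.mem_univ s) (Set.mem_univ (-s))
    (by linarith : (0 : ℝ) ≤ (1 + y) / 2) (by linarith : (0 : ℝ) ≤ (1 - y) / 2) (by ring)
  simp only [smul_eq_mul] at hconv
  calc exp (s * y) = exp ((1 + y) / 2 * s + (1 - y) / 2 * -s) := by ring_nf
    _ ≤ (1 + y) / 2 * exp s + (1 - y) / 2 * exp (-s) := hconv
    _ = cosh s + y * sinh s := by rw [cosh_eq, sinh_eq]; ring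

lemma sum_exp_mul_le_card_mul_exp_sq_half {ι : Type*} [Fintype ι] (w : ι → ℝ)
    (hw : ∀ i, |w i| ≤ 1) (hsum : ∑ i, w i = 0) (s : ℝ) :
    ∑ i, exp (s * w i) ≤ Fintype.card ι * exp (s ^ 2 / 2) :=
  calc ∑ i, exp (s * w i) ≤ ∑ i, (cosh s + w i * sinh s) :=
        sum_le_sum fun i _ => exp_mul_le_cosh_add_mul_sinh s (hw i)
    _ = Fintype.card ι * cosh s := by
        rw [sum_add_distrib, ← sum_mul, hsum, sum_const, card_univ, nsmul_eq_mul]; ring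
    _ ≤ Fintype.card ι * exp (s ^ 2 / 2) := by gcongr; exact cosh_le_exp_half_sq s

lemma sum_exp_mul_sub_mean_le {ι : Type*} [Fintype ι] (v : ι → ℝ)
    (hv : ∀ i, v i ∈ Set.Icc (0 : ℝ) 1) (s : ℝ) :
    ∑ i, exp (s * (v i - (∑ j, v j) / Fintype.card ι)) ≤ Fintype.card ι * exp (s ^ 2 / 2) := by
  rcases isEmpty_or_nonempty ι with hι | hι
  · simp
  have hcard : (0 : ℝ) < Fintype.card ι := by exact_mod_cast Fintype.card_pos
  have hmean : (∑ j, v j) / Fintype.card ι ∈ Set.Icc (0 : ℝ) 1 := by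
    refine ⟨div_nonneg (sum_nonneg fun j _ => (hv j).1) hcard.le, (div_le_one hcard).2 ?_⟩
    simpa using sum_le_sum fun j (_ : j ∈ univ) => (hv j).2
  refine sum_exp_mul_le_card_mul_exp_sq_half _ (fun i => ?_) ?_ s
  · exact abs_sub_le_iff.2 ⟨by linarith [(hv i).2, hmean.1], by linarith [(hv i).1, hmean.2]⟩
  · rw [sum_sub_distrib, sum_const, card_univ, nsmul_eq_mul, mul_div_cancel₀ _ hcard.ne', sub_self]

section prefixSum

open Equiv

variable {N : ℕ}

def prefixSum (ℓ : ℕ) (v : Fin N → ℝ) (σ : Perm (Fin N)) : ℝ :=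
  ∑ j : Fin N, if (j : ℕ) < ℓ then v (σ j) else 0

@[simp]
lemma prefixSum_zero (v : Fin N → ℝ) (σ : Perm (Fin N)) : prefixSum 0 v σ = 0 := by
  simp [prefixSum]

lemma prefixSum_succ_decomposeFin_symm (ℓ : ℕ) (v : Fin (N + 1) → ℝ) (p : Fin (N + 1))
    (e : Perm (Fin N)) :
    prefixSum (ℓ + 1) v (Perm.decomposeFin.symm (p, e)) =
      v p + prefixSum ℓ (fun x => v (swap 0 p x.succ)) e := by
  simp only [prefixSum, Fin.sum_univ_succ, Perm.decomposeFin_symm_apply_zero,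
    Perm.decomposeFin_symm_apply_succ, Fin.val_zero, Fin.val_succ, Nat.succ_lt_succ_iff,
    Nat.zero_lt_succ, if_true]

lemma sum_swap_zero_succ (v : Fin (N + 1) → ℝ) (p : Fin (N + 1)) :
    ∑ x : Fin N, v (swap 0 p x.succ) = (∑ j, v j) - v p := by
  have := Fin.sum_univ_succ fun j => v (swap 0 p j)
  rw [Equiv.sum_comp (swap 0 p) v, swap_apply_left] at this
  linarith

/-- Once the first arrival `x` is revealed, the centered sum of `ℓ + 1` arrivals out of `N + 1`
values with total `S` is that of the remaining `ℓ` out of `N` plus `(1 - ℓ / N) (x - mean)`. -/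
lemma centered_step_eq (ℓ : ℕ) (hℓ : ℓ ≤ N) (S x : ℝ) :
    x + ℓ / N * (S - x) - (ℓ + 1 : ℕ) / (N + 1 : ℕ) * S = (1 - ℓ / N) * (x - S / (N + 1 : ℕ)) := by
  rcases Nat.eq_zero_or_pos ℓ with rfl | hℓpos
  · simp [div_eq_inv_mul]
  have hN : (N : ℝ) ≠ 0 := by exact_mod_cast (hℓpos.trans_le hℓ).ne'
  push_cast
  field_simp
  ring

theorem sum_exp_mul_centered_prefixSum_le (lam : ℝ) (ℓ : ℕ) :
    ∀ {N : ℕ} (v : Fin N → ℝ), (∀ j, v j ∈ Set.Icc (0 : ℝ) 1) → ℓ ≤ N →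
      ∑ σ : Perm (Fin N), exp (lam * (prefixSum ℓ v σ - ℓ / N * ∑ j, v j)) ≤
        N ! * exp (lam ^ 2 * ℓ / 2) := by
  induction ℓ with
  | zero => intro N v _ _; simp [Fintype.card_perm]
  | succ ℓ ih =>
    intro N v hv hℓ
    obtain ⟨N, rfl⟩ : ∃ N', N = N' + 1 := ⟨N - 1, by omega⟩
    have hℓN : ℓ ≤ N := by omega
    set S := ∑ j, v j with hS
    set shift : Fin (N + 1) → ℝ := fun p => (1 - ℓ / N) * (v p - S / (N + 1 : ℕ))
    have hsplit : ∀ p e, lam * (prefixSum (ℓ + 1) v (Perm.decomposeFin.symm (p, e)) -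
          (ℓ + 1 : ℕ) / (N + 1 : ℕ) * S) =
        lam * shift p + lam * (prefixSum ℓ (fun x => v (swap 0 p x.succ)) e -
          ℓ / N * ∑ x : Fin N, v (swap 0 p x.succ)) := by
      intro p e
      rw [prefixSum_succ_decomposeFin_symm, sum_swap_zero_succ, ← hS]
      linear_combination lam * centered_step_eq ℓ hℓN S (v p)
    have hshift : ∑ p, exp (lam * shift p) ≤ (N + 1 : ℕ) * exp (lam ^ 2 / 2) := by
      have h0 : 0 ≤ (ℓ : ℝ) / N := by positivity
      have h1 : (ℓ : ℝ) / N ≤ 1 := div_le_one_of_le₀ (by exact_mod_cast hℓN) (by positivity)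
      calc ∑ p, exp (lam * shift p)
          = ∑ p, exp (lam * (1 - ℓ / N) * (v p - S / Fintype.card (Fin (N + 1)))) := by
            simp only [shift, Fintype.card_fin, mul_assoc]
        _ ≤ Fintype.card (Fin (N + 1)) * exp ((lam * (1 - ℓ / N)) ^ 2 / 2) :=
            sum_exp_mul_sub_mean_le v hv _
        _ ≤ (N + 1 : ℕ) * exp (lam ^ 2 / 2) := by
            rw [Fintype.card_fin, mul_pow]
            gcongr
            exact mul_le_of_le_one_right (sq_nonneg _) (by nlinarith)
    calc ∑ σ : Perm (Fin (N + 1)), exp (lam * (prefixSum (ℓ + 1) v σ - (ℓ + 1 : ℕ) / (N + 1 : ℕ) * S))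
        = ∑ p, exp (lam * shift p) * ∑ e : Perm (Fin N),
            exp (lam * (prefixSum ℓ (fun x => v (swap 0 p x.succ)) e -
              ℓ / N * ∑ x : Fin N, v (swap 0 p x.succ))) := by
          rw [← Perm.decomposeFin.symm.sum_comp, Fintype.sum_prod_type]
          simp only [hsplit, exp_add, mul_sum]
      _ ≤ ∑ p, exp (lam * shift p) * (N ! * exp (lam ^ 2 * ℓ / 2)) := by
          gcongr with p
          exact ih _ (fun x => hv _) hℓN
      _ = N ! * exp (lam ^ 2 * ℓ / 2) * ∑ p, exp (lam * shift p) := by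
          rw [mul_sum]; exact sum_congr rfl fun p _ => by ring
      _ ≤ N ! * exp (lam ^ 2 * ℓ / 2) * ((N + 1 : ℕ) * exp (lam ^ 2 / 2)) := by gcongr
      _ = (N + 1)! * exp (lam ^ 2 * (ℓ + 1 : ℕ) / 2) := by
          rw [Nat.factorial_succ, Nat.cast_mul, show lam ^ 2 * ((ℓ + 1 : ℕ) : ℝ) / 2 =
            lam ^ 2 * ℓ / 2 + lam ^ 2 / 2 by push_cast; ring, exp_add]
          ring

end prefixSum

lemma card_le_abs_mul_exp_le {α : Type*} [Fintype α] (g : α → ℝ) (t : ℝ) {lam : ℝ}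
    (hlam : 0 ≤ lam) :
    #{x | t ≤ |g x|} * exp (lam * t) ≤ ∑ x, exp (lam * g x) + ∑ x, exp (-lam * g x) :=
  calc #{x | t ≤ |g x|} * exp (lam * t) = ∑ x ∈ {x | t ≤ |g x|}, exp (lam * t) := by
        rw [sum_const, nsmul_eq_mul]
    _ ≤ ∑ x ∈ {x | t ≤ |g x|}, exp (lam * |g x|) :=
        sum_le_sum fun x hx => exp_le_exp.2 (mul_le_mul_of_nonneg_left (mem_filter.1 hx).2 hlam)
    _ ≤ ∑ x, exp (lam * |g x|) :=
        sum_le_sum_of_subset_of_nonneg (subset_univ _) fun x _ _ => (exp_pos _).le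
    _ ≤ ∑ x, (exp (lam * g x) + exp (-lam * g x)) := by
        gcongr with x
        have := exp_abs_le (lam * g x)
        rwa [abs_mul, abs_of_nonneg hlam, ← neg_mul] at this
    _ = ∑ x, exp (lam * g x) + ∑ x, exp (-lam * g x) := sum_add_distrib

lemma permProb_le_abs_le_of_sum_exp_le {n : ℕ} (g : Equiv.Perm (Fin n) → ℝ) (c : ℝ)
    (hmgf : ∀ lam, ∑ σ, exp (lam * g σ) ≤ n ! * exp (lam ^ 2 * c / 2)) (t : ℝ) {lam : ℝ}
    (hlam : 0 ≤ lam) :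
    permProb n (fun σ => t ≤ |g σ|) ≤ 2 * exp (lam ^ 2 * c / 2 - lam * t) := by
  have hfac : (0 : ℝ) < n ! := by exact_mod_cast n.factorial_pos
  have hcount := (card_le_abs_mul_exp_le g t hlam).trans (add_le_add (hmgf lam) (hmgf (-lam)))
  rw [neg_sq, ← le_div_iff₀ (exp_pos _)] at hcount
  rw [permProb, div_le_iff₀ hfac]
  refine hcount.trans_eq ?_
  rw [exp_sub]
  ring

theorem row_sum_concentration_general {m n : ℕ}
    (b : Fin m → Fin n → ℝ) (hb : ∀ i j, b i j ∈ Set.Icc (0 : ℝ) 1)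
    (bbar : ℝ) (hbbar : bbar = (1 / (n : ℝ)) * ⨅ i, ∑ j, b i j)
    (i : Fin m) (ℓ : ℕ) (hℓ2 : ℓ ≤ n) :
    permProb n (fun σ =>
      (ℓ : ℝ) * bbar / 2 ≤
        |(∑ j : Fin n, if (j : ℕ) < ℓ then b i (σ j) else 0) -
          (ℓ : ℝ) / (n : ℝ) * ∑ j, b i j|) ≤
    2 * Real.exp (-(ℓ : ℝ) * bbar ^ 2 / 12) := by
  have hbbar0 : 0 ≤ bbar := hbbar ▸
    mul_nonneg (by positivity) (Real.iInf_nonneg fun i' => sum_nonneg fun j _ => (hb i' j).1)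
  calc _ ≤ 2 * exp ((bbar / 2) ^ 2 * ℓ / 2 - bbar / 2 * (ℓ * bbar / 2)) :=
        permProb_le_abs_le_of_sum_exp_le (fun σ => prefixSum ℓ (b i) σ - ℓ / n * ∑ j, b i j) ℓ
          (fun lam => sum_exp_mul_centered_prefixSum_le lam ℓ (b i) (hb i) hℓ2) _ (by positivity)
    _ ≤ 2 * exp (-(ℓ : ℝ) * bbar ^ 2 / 12) := by
        gcongr
        nlinarith [show 0 ≤ (ℓ : ℝ) * bbar ^ 2 by positivity]

/-- For any fixed `i` and `1 ≤ ℓ ≤ n`,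
`P(|∑_{j=1}^ℓ b_{i,σ(j)} − (ℓ/n) ∑_{j=1}^n b_{ij}| ≥ ℓ b̄/2) ≤ 2 exp(−ℓ b̄²/12)`. -/
theorem row_sum_concentration {m n : ℕ} (hm : 0 < m) (hn : 0 < n)
    (b : Fin m → Fin n → ℝ) (hb : ∀ i j, b i j ∈ Set.Icc (0 : ℝ) 1)
    (bbar : ℝ) (hbbar : bbar = (1 / (n : ℝ)) * ⨅ i, ∑ j, b i j)
    (i : Fin m) (ℓ : ℕ) (hℓ1 : 1 ≤ ℓ) (hℓ2 : ℓ ≤ n) :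
    permProb n (fun σ =>
      (ℓ : ℝ) * bbar / 2 ≤
        |(∑ j : Fin n, if (j : ℕ) < ℓ then b i (σ j) else 0) -
          (ℓ : ℝ) / (n : ℝ) * ∑ j, b i j|) ≤
    2 * Real.exp (-(ℓ : ℝ) * bbar ^ 2 / 12) :=
  row_sum_concentration_general b hb bbar hbbar i ℓ hℓ2
end
end
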